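/- arXiv:0909.0227 — 7 statements merged into one kernel-verified Lean document; each statement's English description precedes it below -/
import Mathlib

section
/- If x₀, x₁, x₂ are elements of a field k with char(k) ≠ 2, 3 such that x₀³, x₁³, x₂³ form an arithmetic progression (i.e., x₁³ - x₀³ = x₂³ - x₁³), then the point [6x₁ : 9(x₀ - x₂) : x₀ + x₂] satisfies the projective equation z·y² = x³ - 27·z³. -/
theorem stmt_0_general {k : Type*} [Field k]
    (x₀ x₁ x₂ : k) (hAP : x₁ ^ 3 - x₀ ^ 3 = x₂ ^ 3 - x₁ ^ 3) :
    (x₀ + x₂) * (9 * (x₀ - x₂)) ^ 2 = (6 * x₁) ^ 3 - 27 * (x₀ + x₂) ^ 3 := by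
  -- `(x₀ + x₂)³ + 3 (x₀ + x₂)(x₀ - x₂)² = 4 (x₀³ + x₂³)`, and `x₀³ + x₂³ = 2 x₁³` by `hAP`.
  linear_combination (-108 : k) * hAP

/-- If `x₀³, x₁³, x₂³` form an arithmetic progression in a field `k` with
`char k ≠ 2, 3`, then `[6x₁ : 9(x₀ - x₂) : x₀ + x₂]` satisfies `z·y² = x³ - 27z³`. -/
theorem stmt_0 {k : Type*} [Field k] (h2 : ringChar k ≠ 2) (h3 : ringChar k ≠ 3)
    (x₀ x₁ x₂ : k) (hAP : x₁ ^ 3 - x₀ ^ 3 = x₂ ^ 3 - x₁ ^ 3) :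
    (x₀ + x₂) * (9 * (x₀ - x₂)) ^ 2 = (6 * x₁) ^ 3 - 27 * (x₀ + x₂) ^ 3 :=
  stmt_0_general x₀ x₁ x₂ hAP
end

section
/- If (x, y, z) is a point in a field k with char(k) ≠ 2, 3 satisfying z·y² = x³ - 27·z³, and we set x₀ = 9z + y, x₁ = 3x, x₂ = 9z - y, then x₀³, x₁³, x₂³ form an arithmetic progression, i.e., x₁³ - x₀³ = x₂³ - x₁³. -/
theorem stmt_1_general {k : Type*} [Field k]
    (x y z : k) (hE : z * y ^ 2 = x ^ 3 - 27 * z ^ 3) :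
    (3 * x) ^ 3 - (9 * z + y) ^ 3 = (9 * z - y) ^ 3 - (3 * x) ^ 3 := by
  linear_combination -54 * hE

/-- If `(x, y, z)` satisfies `z·y² = x³ - 27z³` in a field `k` with `char k ≠ 2, 3`,
then with `x₀ = 9z + y`, `x₁ = 3x`, `x₂ = 9z - y`, the cubes `x₀³, x₁³, x₂³` form an
arithmetic progression. -/
theorem stmt_1 {k : Type*} [Field k] (h2 : ringChar k ≠ 2) (h3 : ringChar k ≠ 3)
    (x y z : k) (hE : z * y ^ 2 = x ^ 3 - 27 * z ^ 3) :
    (3 * x) ^ 3 - (9 * z + y) ^ 3 = (9 * z - y) ^ 3 - (3 * x) ^ 3 :=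
  stmt_1_general x y z hE
end

section
/- Over any field k of characteristic ≠ 2, 3, the maps φ([x₀:x₁:x₂]) = [6x₁ : 9(x₀-x₂) : x₀+x₂] and φ⁻¹([x:y:z]) = [(9z+y)/18 : x/6 : (9z-y)/18] are mutually inverse bijections between the solution sets of X₀³ - 2X₁³ + X₂³ = 0 and z·y² = x³ - 27z³ in ℙ²(k). -/
/-!
Characteristic ≠ 2, 3 means exactly that `6` is invertible. Then both maps are linear and
inverse to each other as maps `k³ → k³`, so each sends nonzero triples to nonzero triples.
The curve equations correspond by a polynomial identity: `φ` pulls `z y² - x³ + 27 z³` back to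
`108 (X₀³ - 2 X₁³ + X₂³)`.
-/

lemma Ring.prime_cast_ne_zero {R : Type*} [NonAssocSemiring R] [Nontrivial R] {p : ℕ}
    (hp : p.Prime) (hR : ringChar R ≠ p) : (p : R) ≠ 0 :=
  fun h => hR (CharP.ringChar_of_prime_eq_zero hp h)

namespace DiagonalCubic

variable {k : Type*} [Field k]

def toWeierstrass (v : k × k × k) : k × k × k :=
  (6 * v.2.1, 9 * (v.1 - v.2.2), v.1 + v.2.2)

def ofWeierstrass (w : k × k × k) : k × k × k :=
  ((9 * w.2.2 + w.2.1) / 18, w.1 / 6, (9 * w.2.2 - w.2.1) / 18)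

section

variable (h6 : (6 : k) ≠ 0)
include h6

lemma eighteen_ne_zero_of_six_ne_zero : (18 : k) ≠ 0 := by
  have h3 : (3 : k) ≠ 0 := right_ne_zero_of_mul (a := (2 : k)) (by norm_num [h6])
  simpa [show (18 : k) = 3 * 6 by norm_num] using mul_ne_zero h3 h6

lemma ofWeierstrass_toWeierstrass (v : k × k × k) : ofWeierstrass (toWeierstrass v) = v := by
  have h18 := eighteen_ne_zero_of_six_ne_zero h6
  obtain ⟨x₀, x₁, x₂⟩ := v
  simp only [ofWeierstrass, toWeierstrass, Prod.mk.injEq]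
  refine ⟨?_, ?_, ?_⟩ <;> field_simp <;> ring

lemma toWeierstrass_ofWeierstrass (w : k × k × k) : toWeierstrass (ofWeierstrass w) = w := by
  have h18 := eighteen_ne_zero_of_six_ne_zero h6
  obtain ⟨x, y, z⟩ := w
  simp only [ofWeierstrass, toWeierstrass, Prod.mk.injEq]
  refine ⟨?_, ?_, ?_⟩ <;> field_simp <;> ring

lemma toWeierstrass_ne_zero {v : k × k × k} (hv : v ≠ 0) : toWeierstrass v ≠ 0 := by
  intro h
  apply hv
  rw [← ofWeierstrass_toWeierstrass h6 v, h]
  simp [ofWeierstrass]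

lemma ofWeierstrass_ne_zero {w : k × k × k} (hw : w ≠ 0) : ofWeierstrass w ≠ 0 := by
  intro h
  apply hw
  rw [← toWeierstrass_ofWeierstrass h6 w, h]
  simp [toWeierstrass]

lemma diagonal_eq_ofWeierstrass {x y z : k} (h : z * y ^ 2 = x ^ 3 - 27 * z ^ 3) :
    ((9 * z + y) / 18) ^ 3 - 2 * (x / 6) ^ 3 + ((9 * z - y) / 18) ^ 3 = 0 := by
  have h18 := eighteen_ne_zero_of_six_ne_zero h6
  field_simp
  linear_combination 11664 * h

end

lemma weierstrass_eq_toWeierstrass {x₀ x₁ x₂ : k} (h : x₀ ^ 3 - 2 * x₁ ^ 3 + x₂ ^ 3 = 0) :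
    (x₀ + x₂) * (9 * (x₀ - x₂)) ^ 2 = (6 * x₁) ^ 3 - 27 * (x₀ + x₂) ^ 3 := by
  linear_combination 108 * h

end DiagonalCubic

open DiagonalCubic in
/-- Over a field `k` of characteristic ≠ 2, 3, the maps
`φ([x₀:x₁:x₂]) = [6x₁ : 9(x₀-x₂) : x₀+x₂]` and
`φ⁻¹([x:y:z]) = [(9z+y)/18 : x/6 : (9z-y)/18]` are mutually inverse bijections between
the solution sets of `X₀³ - 2X₁³ + X₂³ = 0` and `z·y² = x³ - 27z³` in `ℙ²(k)`:
they map solutions (nonzero coordinate triples) to solutions, and are inverse to each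
other on representatives. -/
theorem stmt_3 {k : Type*} [Field k] (h2 : ringChar k ≠ 2) (h3 : ringChar k ≠ 3) :
    (∀ x₀ x₁ x₂ : k, (x₀, x₁, x₂) ≠ (0, 0, 0) → x₀ ^ 3 - 2 * x₁ ^ 3 + x₂ ^ 3 = 0 →
      (6 * x₁, 9 * (x₀ - x₂), x₀ + x₂) ≠ (0, 0, 0) ∧
      (x₀ + x₂) * (9 * (x₀ - x₂)) ^ 2 = (6 * x₁) ^ 3 - 27 * (x₀ + x₂) ^ 3 ∧
      ((9 * (x₀ + x₂) + 9 * (x₀ - x₂)) / 18, (6 * x₁) / 6,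
        (9 * (x₀ + x₂) - 9 * (x₀ - x₂)) / 18) = (x₀, x₁, x₂)) ∧
    (∀ x y z : k, (x, y, z) ≠ (0, 0, 0) → z * y ^ 2 = x ^ 3 - 27 * z ^ 3 →
      ((9 * z + y) / 18, x / 6, (9 * z - y) / 18) ≠ (0, 0, 0) ∧
      ((9 * z + y) / 18) ^ 3 - 2 * (x / 6) ^ 3 + ((9 * z - y) / 18) ^ 3 = 0 ∧
      (6 * (x / 6), 9 * ((9 * z + y) / 18 - (9 * z - y) / 18),
        (9 * z + y) / 18 + (9 * z - y) / 18) = (x, y, z)) := by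
  have h6 : (6 : k) ≠ 0 := by
    have h3 : (3 : k) ≠ 0 := by exact_mod_cast Ring.prime_cast_ne_zero Nat.prime_three h3
    simpa [show (6 : k) = 2 * 3 by norm_num] using mul_ne_zero (Ring.two_ne_zero h2) h3
  refine ⟨fun x₀ x₁ x₂ hv hc => ⟨?_, ?_, ?_⟩, fun x y z hw hc => ⟨?_, ?_, ?_⟩⟩
  · exact toWeierstrass_ne_zero h6 hv
  · exact weierstrass_eq_toWeierstrass hc
  · exact ofWeierstrass_toWeierstrass h6 (x₀, x₁, x₂)
  · exact ofWeierstrass_ne_zero h6 hw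
  · exact diagonal_eq_ofWeierstrass h6 hc
  · exact toWeierstrass_ofWeierstrass h6 (x, y, z)
end

section
/- The only rational points on the elliptic curve y² = x³ - 27 over ℚ are the point at infinity and (3, 0); equivalently, the Mordell–Weil group E(ℚ) is isomorphic to ℤ/2ℤ. -/
/-!
Write a rational point as `x = n / c²` with `n, c` coprime, so that `t² = n³ - 27 c⁶` for an
integer `t`, and put `a = n - 3c²`. Then `t² = a (a² + 9ac² + 27c⁴)`: the curve with its
`2`-torsion point `(3, 0)` moved to the origin. The two factors are coprime up to powers of `3`,
and the `3`-adic valuation forces `3 ∤ a` or `27 ∣ a`. In both cases both factors (after removing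
`27`) are squares, giving a primitive solution of `V² = u⁴ + 9u²c² + 27c⁴` with `(u, c) = (√a, c)`,
resp. `(c, √(a/27))`.

This quartic and `U² = m⁴ - 18m²n² - 27n⁴` are the `2`-coverings of the `2`-isogeny between
`y² = x (x² + 9x + 27)` and `y² = x (x² - 18x - 27)`. Writing each as a difference of squares
equal to `4 · 27 k⁴` and splitting the two coprime factors into a fourth power and `27` times a
fourth power turns a primitive solution of one with nonzero second variable into one of the other,
with a second variable that never grows and strictly shrinks on the way from the first quartic to
the second. By infinite descent the second variable is `0`; as `c ≠ 0`, this leaves `a = 0`, so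
`(3, 0)` is the only affine point and `E(ℚ)` has order `2`.
-/

namespace Int

theorem exists_eq_pow_of_mul_eq_pow_of_nonneg {a b c : ℤ} {k : ℕ} (hab : IsCoprime a b)
    (ha : 0 ≤ a) (h : a * b = c ^ k) : ∃ d : ℤ, a = d ^ k := by
  obtain ⟨d, hd⟩ := exists_eq_pow_of_mul_eq_pow
    (Nat.isUnit_iff.mpr (isCoprime_iff_nat_coprime.mp hab)) (by rw [← natAbs_mul, h, natAbs_pow])
  exact ⟨d, by rw [← natAbs_of_nonneg ha, hd]; push_cast; rfl⟩

theorem natAbs_eq_of_pow_eq {a b : ℤ} {n : ℕ} (hn : n ≠ 0) (h : a ^ n = b ^ n) :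
    a.natAbs = b.natAbs :=
  Nat.pow_left_injective hn (by simp only [← natAbs_pow, h])

theorem exists_eq_mul_sq_of_sq_eq_mul {p r x : ℤ} (hp : Prime p) (h : r ^ 2 = p * x) :
    ∃ s, x = p * s ^ 2 := by
  obtain ⟨s, rfl⟩ := hp.dvd_of_dvd_pow (Dvd.intro x h.symm)
  exact ⟨s, mul_left_cancel₀ hp.ne_zero (by linear_combination -h)⟩

theorem dvd_of_sq_eq_pow_three_mul {p r x : ℤ} (hp : Prime p) (h : r ^ 2 = p ^ 3 * x) :
    p ∣ x := by
  obtain ⟨s, hs⟩ := exists_eq_mul_sq_of_sq_eq_mul hp (r := r) (x := p ^ 2 * x) (by rw [h]; ring)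
  obtain ⟨t, rfl⟩ := exists_eq_mul_sq_of_sq_eq_mul hp (r := s) (x := x)
    (mul_left_cancel₀ hp.ne_zero (by linear_combination -hs))
  exact dvd_mul_right p _

theorem three_dvd_of_three_dvd_sq_add_sq {x y : ℤ} (h : 3 ∣ x ^ 2 + y ^ 2) : 3 ∣ x := by
  have key : ∀ a b : ZMod 3, a ^ 2 + b ^ 2 = 0 → a = 0 := by decide
  have h' := (ZMod.intCast_zmod_eq_zero_iff_dvd _ 3).mpr h
  push_cast at h'
  exact (ZMod.intCast_zmod_eq_zero_iff_dvd _ 3).mp (key _ _ h')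

theorem isCoprime_twentySeven_mul_pow_four {x y : ℤ} (hx : ¬ 3 ∣ x) (hxy : IsCoprime x y)
    (z : ℤ) : IsCoprime (27 * y ^ 4) (x ^ 2 + 3 * y * z) := by
  have h3 : IsCoprime (3 : ℤ) (x ^ 2 + 3 * (y * z)) :=
    IsCoprime.add_mul_left_right_iff.mpr (prime_three.coprime_iff_not_dvd.mpr hx).pow_right
  have hy : IsCoprime y (x ^ 2 + y * (3 * z)) :=
    IsCoprime.add_mul_left_right_iff.mpr hxy.symm.pow_right
  have h27 := h3.pow_left (m := 3)
  norm_num at h27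
  rw [mul_assoc]
  exact h27.mul_left (by simpa only [mul_left_comm] using hy.pow_left (m := 4))

theorem exists_isCoprime_mul_eq_of_sq_eq_sq_add_four_mul {V w M : ℤ}
    (h : V ^ 2 = w ^ 2 + 4 * M) (hM : 0 < M) (hMw : IsCoprime M w) :
    ∃ A B : ℤ, 0 < A ∧ 0 < B ∧ IsCoprime A B ∧ A * B = M ∧ A + B = |V| ∧ B - A = |w| := by
  have habs : |V| ^ 2 = |w| ^ 2 + 4 * M := by simpa only [sq_abs] using h
  have heven : Even (|V| - |w|) := by
    by_contra hodd
    rw [not_even_iff_odd] at hodd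
    have hsum : Odd (|V| + |w|) := by
      have := hodd.add_even (even_two_mul |w|)
      rwa [show |V| - |w| + 2 * |w| = |V| + |w| by ring] at this
    exact not_even_iff_odd.mpr (hodd.mul hsum) ⟨2 * M, by linear_combination habs⟩
  obtain ⟨A, hA⟩ := heven
  have hprod : A * (A + |w|) = M := by
    refine mul_left_cancel₀ (four_ne_zero (α := ℤ)) ?_
    linear_combination habs - (|V| + |w| + 2 * A) * hA
  have hAw : IsCoprime A |w| := (hprod ▸ hMw.abs_right).of_mul_left_left
  have hB : 0 ≤ A + |w| := by linarith [abs_nonneg V, abs_nonneg w]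
  have hA0 : 0 < A := pos_of_mul_pos_left (hprod ▸ hM) hB
  refine ⟨A, A + |w|, hA0, by linarith [abs_nonneg w], ?_, hprod, by linarith, by ring⟩
  simpa [add_comm] using hAw.add_mul_left_right 1

theorem exists_eq_pow_of_mul_eq_prime_pow_mul_pow_of_dvd {p A B k : ℤ} {j n : ℕ} (hp : Prime p)
    (hp0 : 0 < p) (hA : 0 ≤ A) (hB : 0 ≤ B) (hAB : IsCoprime A B) (h : A * B = p ^ j * k ^ n)
    (hpB : p ∣ B) : ∃ e f : ℤ, A = e ^ n ∧ B = p ^ j * f ^ n := by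
  have hpA : IsCoprime (p ^ j) A :=
    (hp.coprime_iff_not_dvd.mpr fun hpA ↦ hp.not_isUnit (hAB.isUnit_of_dvd' hpA hpB)).pow_left
  obtain ⟨B', rfl⟩ := hpA.dvd_of_dvd_mul_left (Dvd.intro _ h.symm)
  have hpj : 0 < p ^ j := pow_pos hp0 j
  have hA' : A * B' = k ^ n := mul_left_cancel₀ hpj.ne' (by linear_combination h)
  have hAB' : IsCoprime A B' := hAB.of_mul_right_right
  obtain ⟨e, rfl⟩ := exists_eq_pow_of_mul_eq_pow_of_nonneg hAB' hA hA'
  obtain ⟨f, rfl⟩ := exists_eq_pow_of_mul_eq_pow_of_nonneg hAB'.symm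
    (nonneg_of_mul_nonneg_right hB hpj) (by rw [mul_comm, hA'])
  exact ⟨e, f, rfl, rfl⟩

theorem exists_eq_pow_of_mul_eq_prime_pow_mul_pow {p A B k : ℤ} {j n : ℕ} (hp : Prime p)
    (hp0 : 0 < p) (hj : j ≠ 0) (hA : 0 ≤ A) (hB : 0 ≤ B) (hAB : IsCoprime A B)
    (h : A * B = p ^ j * k ^ n) :
    ∃ e f : ℤ, (A = e ^ n ∧ B = p ^ j * f ^ n) ∨ (A = p ^ j * e ^ n ∧ B = f ^ n) := by
  rcases hp.dvd_or_dvd (h ▸ (dvd_pow_self p hj).mul_right _) with hpA | hpB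
  · obtain ⟨f, e, hB, hA⟩ := exists_eq_pow_of_mul_eq_prime_pow_mul_pow_of_dvd hp hp0 hB hA
      hAB.symm (by rw [mul_comm, h]) hpA
    exact ⟨e, f, Or.inr ⟨hA, hB⟩⟩
  · obtain ⟨e, f, hA, hB⟩ :=
      exists_eq_pow_of_mul_eq_prime_pow_mul_pow_of_dvd hp hp0 hA hB hAB h hpB
    exact ⟨e, f, Or.inl ⟨hA, hB⟩⟩

end Int

theorem Rat.exists_int_sq_eq_of_sq_eq_pow_three_add {x y : ℚ} {k : ℤ} (h : y ^ 2 = x ^ 3 + k) :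
    ∃ n c t : ℤ, IsCoprime n c ∧ c ≠ 0 ∧ x = n / c ^ 2 ∧ t ^ 2 = n ^ 3 + k * c ^ 6 := by
  obtain ⟨n, d, hd, hnd, rfl⟩ : ∃ n d : ℤ, 0 < d ∧ IsCoprime n d ∧ x = n / d :=
    ⟨x.num, x.den, Int.natCast_pos.mpr x.pos,
      Int.isCoprime_iff_nat_coprime.mpr (by simpa using x.reduced),
      by rw [Int.cast_natCast, Rat.num_div_den]⟩
  obtain ⟨R, hR⟩ : IsSquare (d * (n ^ 3 + k * d ^ 3)) := by
    refine isSquare_intCast_iff.mp ⟨y * d ^ 2, ?_⟩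
    have hd0 : (d : ℚ) ≠ 0 := by exact_mod_cast hd.ne'
    field_simp at h
    push_cast
    linear_combination -(d : ℚ) * h
  have hcop : IsCoprime d (n ^ 3 + d * (k * d ^ 2)) :=
    IsCoprime.add_mul_left_right_iff.mpr hnd.symm.pow_right
  rw [show d * (k * d ^ 2) = k * d ^ 3 by ring] at hcop
  obtain ⟨c, rfl⟩ := Int.exists_eq_pow_of_mul_eq_pow_of_nonneg hcop hd.le (hR.trans (sq R).symm)
  obtain ⟨t, ht⟩ := Int.exists_eq_pow_of_mul_eq_pow_of_nonneg hcop.symm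
    (nonneg_of_mul_nonneg_right (hR ▸ mul_self_nonneg R) hd) (by rw [mul_comm, hR, sq])
  refine ⟨n, c, t, (IsCoprime.pow_right_iff two_pos).mp hnd, ?_, by push_cast; rfl, ?_⟩
  · rintro rfl
    simp at hd
  · rw [← ht]; ring

theorem WeierstrassCurve.Affine.card_point_eq_two {F : Type*} [Field F]
    {W : WeierstrassCurve.Affine F} {x₀ y₀ : F} (h₀ : W.Nonsingular x₀ y₀)
    (h : ∀ x y, W.Equation x y → x = x₀ ∧ y = y₀) : Nat.card W.Point = 2 := by
  refine Nat.card_eq_two_iff.mpr ⟨0, .some _ _ h₀, (Point.some_ne_zero h₀).symm, ?_⟩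
  ext (_ | ⟨x, y, hP⟩)
  · exact iff_of_true (Or.inl rfl) trivial
  · obtain ⟨rfl, rfl⟩ := h _ _ hP.1
    simp

namespace MordellNeg27

def quartic (u c : ℤ) : ℤ := u ^ 4 + 9 * u ^ 2 * c ^ 2 + 27 * c ^ 4

def dualQuartic (m n : ℤ) : ℤ := m ^ 4 - 18 * m ^ 2 * n ^ 2 - 27 * n ^ 4

theorem not_three_dvd_of_sq_eq_quartic {u c V : ℤ} (hcop : IsCoprime u c)
    (h : V ^ 2 = quartic u c) : ¬ 3 ∣ u := by
  rintro ⟨u, rfl⟩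
  have h3 : 3 ∣ 3 * (u ^ 4 + u ^ 2 * c ^ 2) + c ^ 4 :=
    Int.dvd_of_sq_eq_pow_three_mul Int.prime_three (r := V) (by rw [h, quartic]; ring)
  have h3c := Int.prime_three.dvd_of_dvd_pow ((Int.dvd_add_right (dvd_mul_right _ _)).mp h3)
  exact Int.prime_three.not_isUnit (hcop.isUnit_of_dvd' (dvd_mul_right _ _) h3c)

theorem not_three_dvd_of_sq_eq_dualQuartic {m n U : ℤ} (hcop : IsCoprime m n)
    (h : U ^ 2 = dualQuartic m n) : ¬ 3 ∣ m := by
  rintro ⟨m, rfl⟩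
  have h3 : 3 ∣ 3 * (m ^ 4 - 2 * m ^ 2 * n ^ 2) + -n ^ 4 :=
    Int.dvd_of_sq_eq_pow_three_mul Int.prime_three (r := U) (by rw [h, dualQuartic]; ring)
  have h3n := Int.prime_three.dvd_of_dvd_pow
    (dvd_neg.mp ((Int.dvd_add_right (dvd_mul_right _ _)).mp h3))
  exact Int.prime_three.not_isUnit (hcop.isUnit_of_dvd' (dvd_mul_right _ _) h3n)

theorem two_dvd_of_sq_eq_quartic {u c V : ℤ} (h : V ^ 2 = quartic u c) : 2 ∣ c := by
  have key : ∀ k u V : ZMod 8,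
      V ^ 2 ≠ u ^ 4 + 9 * u ^ 2 * (2 * k + 1) ^ 2 + 27 * (2 * k + 1) ^ 4 := by decide
  rcases Int.even_or_odd c with hc | ⟨k, rfl⟩
  · exact hc.two_dvd
  · have h8 := congrArg (fun t : ℤ ↦ (t : ZMod 8)) h
    push_cast [quartic] at h8
    exact absurd h8 (key _ _ _)

theorem exists_sq_eq_dualQuartic_of_sq_eq_quartic {u c V : ℤ} (hcop : IsCoprime u c)
    (hc : c ≠ 0) (h : V ^ 2 = quartic u c) :
    ∃ m n U : ℤ, IsCoprime m n ∧ n ≠ 0 ∧ n.natAbs < c.natAbs ∧ U ^ 2 = dualQuartic m n := by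
  have h3u := not_three_dvd_of_sq_eq_quartic hcop h
  obtain ⟨k, rfl⟩ := two_dvd_of_sq_eq_quartic h
  have hk : k ≠ 0 := right_ne_zero_of_mul hc
  have hcopk : IsCoprime (27 * k ^ 4) (u ^ 2 + 18 * k ^ 2) := by
    convert Int.isCoprime_twentySeven_mul_pow_four h3u hcop.of_mul_right_right (6 * k) using 2
    ring
  obtain ⟨A, B, hA, hB, hAB, hprod, -, hdiff⟩ :=
    Int.exists_isCoprime_mul_eq_of_sq_eq_sq_add_four_mul (V := V) (w := u ^ 2 + 18 * k ^ 2)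
      (by rw [h, quartic]; ring) (by positivity) hcopk
  rw [abs_of_nonneg (by positivity)] at hdiff
  obtain ⟨e, f, ⟨rfl, rfl⟩ | ⟨rfl, rfl⟩⟩ := Int.exists_eq_pow_of_mul_eq_prime_pow_mul_pow
    (j := 3) (k := k) (n := 4) Int.prime_three three_pos three_ne_zero hA.le hB.le hAB
    (by rw [hprod]; norm_num)
  · exact absurd (Int.three_dvd_of_three_dvd_sq_add_sq (y := e ^ 2)
      ⟨9 * f ^ 4 - 6 * k ^ 2, by linear_combination -hdiff⟩) h3u
  · have hef : (e * f).natAbs = k.natAbs := Int.natAbs_eq_of_pow_eq four_ne_zero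
      (mul_left_cancel₀ (by norm_num : (27 : ℤ) ≠ 0) (by linear_combination hprod))
    have hk2 : k ^ 2 = e ^ 2 * f ^ 2 := by rw [← mul_pow, ← Int.natAbs_eq_iff_sq_eq.mp hef]
    have he : e ≠ 0 := by rintro rfl; simp [eq_comm, hk] at hef
    have hf : f ≠ 0 := by rintro rfl; simp [eq_comm, hk] at hef
    refine ⟨f, e, u, ((IsCoprime.pow_iff four_pos four_pos).mp hAB.of_mul_left_right).symm, he,
      ?_, by rw [dualQuartic]; linear_combination -hdiff - 18 * hk2⟩
    calc e.natAbs ≤ e.natAbs * f.natAbs := Nat.le_mul_of_pos_right _ (Int.natAbs_pos.mpr hf)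
      _ = k.natAbs := by rw [← Int.natAbs_mul, hef]
      _ < (2 * k).natAbs := by have := Int.natAbs_pos.mpr hk; omega

theorem exists_sq_eq_quartic_of_sq_eq_dualQuartic {m n U : ℤ} (hcop : IsCoprime m n)
    (hn : n ≠ 0) (h : U ^ 2 = dualQuartic m n) :
    ∃ u c V : ℤ, IsCoprime u c ∧ c ≠ 0 ∧ c.natAbs ≤ n.natAbs ∧ V ^ 2 = quartic u c := by
  have h3m := not_three_dvd_of_sq_eq_dualQuartic hcop h
  have hpos : 0 < m ^ 2 - 9 * n ^ 2 := by
    have hm : m ^ 2 * (m ^ 2 - 18 * n ^ 2) = U ^ 2 + 27 * n ^ 4 := by rw [h, dualQuartic]; ring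
    have : 0 < m ^ 2 * (m ^ 2 - 18 * n ^ 2) := hm ▸ by positivity
    nlinarith [sq_nonneg m, sq_nonneg n]
  have hcopV : IsCoprime (27 * n ^ 4) (m ^ 2 - 9 * n ^ 2) := by
    convert Int.isCoprime_twentySeven_mul_pow_four h3m hcop (-3 * n) using 2
    ring
  have hcopU : IsCoprime (27 * n ^ 4) U := by
    have hU : U ^ 2 = (m ^ 2 - 9 * n ^ 2) ^ 2 + 27 * n ^ 4 * (-4) := by rw [h, dualQuartic]; ring
    exact IsCoprime.pow_right_iff two_pos |>.mp
      (hU ▸ IsCoprime.add_mul_left_right_iff.mpr hcopV.pow_right)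
  obtain ⟨A, B, hA, hB, hAB, hprod, hsum, -⟩ :=
    Int.exists_isCoprime_mul_eq_of_sq_eq_sq_add_four_mul (V := m ^ 2 - 9 * n ^ 2) (w := U)
      (by rw [h, dualQuartic]; ring) (by positivity) hcopU
  rw [abs_of_pos hpos] at hsum
  obtain ⟨e, f, hef, hsum, hprod⟩ : ∃ e f : ℤ,
      IsCoprime e f ∧ e ^ 4 + 27 * f ^ 4 = m ^ 2 - 9 * n ^ 2 ∧ (e * f) ^ 4 = n ^ 4 := by
    obtain ⟨e, f, ⟨rfl, rfl⟩ | ⟨rfl, rfl⟩⟩ := Int.exists_eq_pow_of_mul_eq_prime_pow_mul_pow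
      (j := 3) (k := n) (n := 4) Int.prime_three three_pos three_ne_zero hA.le hB.le hAB
      (by rw [hprod]; norm_num)
    · refine ⟨e, f, (IsCoprime.pow_iff four_pos four_pos).mp hAB.of_mul_right_right,
        by linear_combination hsum, ?_⟩
      exact mul_left_cancel₀ (by norm_num : (27 : ℤ) ≠ 0) (by linear_combination hprod)
    · refine ⟨f, e, ((IsCoprime.pow_iff four_pos four_pos).mp hAB.of_mul_left_right).symm,
        by linear_combination hsum, ?_⟩
      exact mul_left_cancel₀ (by norm_num : (27 : ℤ) ≠ 0) (by linear_combination hprod)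
  have hnat : (e * f).natAbs = n.natAbs := Int.natAbs_eq_of_pow_eq four_ne_zero hprod
  have hn2 : n ^ 2 = e ^ 2 * f ^ 2 := by rw [← mul_pow, ← Int.natAbs_eq_iff_sq_eq.mp hnat]
  have he : e ≠ 0 := by rintro rfl; simp [eq_comm, hn] at hnat
  have hf : f ≠ 0 := by rintro rfl; simp [eq_comm, hn] at hnat
  refine ⟨e, f, m, hef, hf, ?_, by rw [quartic]; linear_combination -hsum + 9 * hn2⟩
  calc f.natAbs ≤ e.natAbs * f.natAbs := Nat.le_mul_of_pos_left _ (Int.natAbs_pos.mpr he)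
    _ = n.natAbs := by rw [← Int.natAbs_mul, hnat]

theorem eq_zero_of_sq_eq_quartic {u c V : ℤ} (hcop : IsCoprime u c) (h : V ^ 2 = quartic u c) :
    c = 0 := by
  induction hN : c.natAbs using Nat.strong_induction_on generalizing u c V with
  | _ N ih =>
  by_contra hc
  obtain ⟨m, n, U, hmn, hn, hlt, hU⟩ := exists_sq_eq_dualQuartic_of_sq_eq_quartic hcop hc h
  obtain ⟨u', c', V', hcop', hc', hle, h'⟩ := exists_sq_eq_quartic_of_sq_eq_dualQuartic hmn hn hU
  exact hc' (ih _ (hN ▸ hle.trans_lt hlt) hcop' h' rfl)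

/- If `3 ∣ a` but `27 ∤ a`, the `3`-adic valuation of the right-hand side is `3` or `5`. -/
theorem twentySeven_dvd_of_sq_eq_mul {a c r : ℤ} (hc : ¬ 3 ∣ c) (ha : 3 ∣ a)
    (h : r ^ 2 = a * (a ^ 2 + 9 * a * c ^ 2 + 27 * c ^ 4)) : 27 ∣ a := by
  obtain ⟨e, rfl⟩ := ha
  have h3e : 3 ∣ e := by
    have h3 : 3 ∣ e * (e ^ 2 + 3 * (e * c ^ 2 + c ^ 4)) :=
      Int.dvd_of_sq_eq_pow_three_mul Int.prime_three (r := r) (by rw [h]; ring)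
    refine (Int.prime_three.dvd_or_dvd h3).elim id fun h3 ↦
      Int.prime_three.dvd_of_dvd_pow (n := 2) ?_
    exact (Int.dvd_add_left (dvd_mul_right 3 _)).mp h3
  obtain ⟨f, rfl⟩ := h3e
  have h3f : 3 ∣ f := by
    obtain ⟨s, hs⟩ := Int.exists_eq_mul_sq_of_sq_eq_mul Int.prime_three (r := r)
      (x := 81 * (f * (3 * (f ^ 2 + f * c ^ 2) + c ^ 4))) (by rw [h]; ring)
    have h3 := Int.dvd_of_sq_eq_pow_three_mul Int.prime_three (r := s)
      (x := f * (3 * (f ^ 2 + f * c ^ 2) + c ^ 4))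
      (mul_left_cancel₀ (three_ne_zero (α := ℤ)) (by linear_combination -hs))
    refine (Int.prime_three.dvd_or_dvd h3).elim id fun h3 ↦ absurd ?_ hc
    exact Int.prime_three.dvd_of_dvd_pow ((Int.dvd_add_right (dvd_mul_right 3 _)).mp h3)
  obtain ⟨g, rfl⟩ := h3f
  exact ⟨g, by ring⟩

theorem eq_zero_of_sq_eq_mul_of_not_three_dvd {a c r : ℤ} (hac : IsCoprime a c) (h3 : ¬ 3 ∣ a)
    (ha : 0 ≤ a) (h : r ^ 2 = a * (a ^ 2 + 9 * a * c ^ 2 + 27 * c ^ 4)) : c = 0 := by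
  have h27 : IsCoprime a 27 := by
    have := (Int.prime_three.coprime_iff_not_dvd.mpr h3).symm.pow_right (n := 3)
    norm_num at this
    exact this
  have hcop : IsCoprime a (a ^ 2 + 9 * a * c ^ 2 + 27 * c ^ 4) := by
    have := (IsCoprime.add_mul_left_right_iff (z := a + 9 * c ^ 2)).mpr
      (h27.mul_right (hac.pow_right (n := 4)))
    rwa [show 27 * c ^ 4 + a * (a + 9 * c ^ 2) = a ^ 2 + 9 * a * c ^ 2 + 27 * c ^ 4 by ring]
      at this
  obtain ⟨s, rfl⟩ := Int.exists_eq_pow_of_mul_eq_pow_of_nonneg hcop ha h.symm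
  obtain ⟨t, ht⟩ := Int.exists_eq_pow_of_mul_eq_pow_of_nonneg hcop.symm (by positivity)
    (by rw [mul_comm, h])
  exact eq_zero_of_sq_eq_quartic ((IsCoprime.pow_left_iff two_pos).mp hac) (V := t)
    (by rw [quartic, ← ht]; ring)

theorem eq_zero_of_sq_eq_mul_of_twentySeven_dvd {a c r : ℤ} (hac : IsCoprime a c) (ha : 0 ≤ a)
    (h27 : 27 ∣ a) (h : r ^ 2 = a * (a ^ 2 + 9 * a * c ^ 2 + 27 * c ^ 4)) : a = 0 := by
  obtain ⟨b, rfl⟩ := h27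
  obtain ⟨r, rfl⟩ : 27 ∣ r := (Int.pow_dvd_pow_iff two_ne_zero).mp
    ⟨b * (c ^ 4 + 9 * c ^ 2 * b + 27 * b ^ 2), by rw [h]; ring⟩
  have h' : r ^ 2 = b * (c ^ 4 + b * (9 * c ^ 2 + 27 * b)) :=
    mul_left_cancel₀ (by norm_num : (729 : ℤ) ≠ 0) (by linear_combination h)
  have hbc : IsCoprime b c := hac.of_mul_left_right
  have hcop : IsCoprime b (c ^ 4 + b * (9 * c ^ 2 + 27 * b)) :=
    IsCoprime.add_mul_left_right_iff.mpr hbc.pow_right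
  have hb : 0 ≤ b := nonneg_of_mul_nonneg_right ha (by norm_num)
  obtain ⟨s, rfl⟩ := Int.exists_eq_pow_of_mul_eq_pow_of_nonneg hcop hb h'.symm
  obtain ⟨t, ht⟩ := Int.exists_eq_pow_of_mul_eq_pow_of_nonneg hcop.symm (by positivity)
    (by rw [mul_comm, h'])
  have hs := eq_zero_of_sq_eq_quartic ((IsCoprime.pow_left_iff two_pos).mp hbc).symm (V := t)
    (by rw [quartic, ← ht]; ring)
  simp [hs]

theorem eq_three_mul_sq_of_sq_eq {p c r : ℤ} (hpc : IsCoprime p c) (hc : c ≠ 0)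
    (h : r ^ 2 = p ^ 3 - 27 * c ^ 6) : p = 3 * c ^ 2 ∧ r = 0 := by
  obtain ⟨a, rfl⟩ : ∃ a, p = a + 3 * c ^ 2 := ⟨p - 3 * c ^ 2, by ring⟩
  have hr : r ^ 2 = a * (a ^ 2 + 9 * a * c ^ 2 + 27 * c ^ 4) := by rw [h]; ring
  have hac : IsCoprime a c := by
    have := hpc.add_mul_right_left (-3 * c)
    rwa [show a + 3 * c ^ 2 + -3 * c * c = a by ring] at this
  have ha : 0 ≤ a := by
    have hQ : 0 < a ^ 2 + 9 * a * c ^ 2 + 27 * c ^ 4 := by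
      have hc4 : 0 < c ^ 4 := by positivity
      nlinarith [sq_nonneg (2 * a + 9 * c ^ 2)]
    exact nonneg_of_mul_nonneg_left (hr ▸ sq_nonneg r) hQ
  have ha0 : a = 0 := by
    by_cases h3 : 3 ∣ a
    · have h3c : ¬ 3 ∣ c := fun h3c ↦ Int.prime_three.not_isUnit (hac.isUnit_of_dvd' h3 h3c)
      exact eq_zero_of_sq_eq_mul_of_twentySeven_dvd hac ha
        (twentySeven_dvd_of_sq_eq_mul h3c h3 hr) hr
    · exact absurd (eq_zero_of_sq_eq_mul_of_not_three_dvd hac h3 ha hr) hc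
  subst ha0
  exact ⟨by ring, pow_eq_zero_iff two_ne_zero |>.mp (by rw [hr]; ring)⟩

theorem eq_three_of_sq_eq {x y : ℚ} (h : y ^ 2 = x ^ 3 - 27) : x = 3 ∧ y = 0 := by
  obtain ⟨n, c, t, hnc, hc, rfl, ht⟩ :=
    Rat.exists_int_sq_eq_of_sq_eq_pow_three_add (k := -27) (by rw [h]; push_cast; ring)
  obtain ⟨rfl, -⟩ := eq_three_mul_sq_of_sq_eq hnc hc (by rw [ht]; ring)
  have hc2 : c ^ 2 = 1 := Int.isUnit_sq (hnc.isUnit_of_dvd' ⟨3 * c, by ring⟩ dvd_rfl)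
  have hx : ((3 * c ^ 2 : ℤ) : ℚ) / (c : ℚ) ^ 2 = 3 := by rw [← Int.cast_pow, hc2]; norm_num
  exact ⟨hx, pow_eq_zero_iff two_ne_zero |>.mp (by rw [h, hx]; norm_num)⟩

def curve : WeierstrassCurve.Affine ℚ := { a₁ := 0, a₂ := 0, a₃ := 0, a₄ := 0, a₆ := -27 }

theorem equation_curve_iff (x y : ℚ) : curve.Equation x y ↔ y ^ 2 = x ^ 3 - 27 := by
  rw [WeierstrassCurve.Affine.equation_iff]
  simp [curve, sub_eq_add_neg]

theorem nonsingular_curve_three_zero : curve.Nonsingular 3 0 := by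
  rw [WeierstrassCurve.Affine.nonsingular_iff, equation_curve_iff]
  norm_num [curve]

theorem card_point_curve : Nat.card curve.Point = 2 :=
  WeierstrassCurve.Affine.card_point_eq_two nonsingular_curve_three_zero
    fun x y h ↦ eq_three_of_sq_eq ((equation_curve_iff x y).mp h)

end MordellNeg27

/-- The Mordell–Weil group of the elliptic curve `E : y² = x³ - 27` over `ℚ` is
isomorphic to `ℤ/2ℤ`. -/
theorem stmt_4 :
    letI W : WeierstrassCurve.Affine ℚ :=
      { a₁ := 0, a₂ := 0, a₃ := 0, a₄ := 0, a₆ := -27 }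
    Nonempty (W.Point ≃+ ZMod 2) :=
  ⟨addEquivOfPrimeCardEq MordellNeg27.card_point_curve (Nat.card_zmod 2)⟩
end

section
/- Let D be a squarefree integer. For any rational point (x, y) on E^D: y² = x³ - 27D³, the three elements (9D² + y√D)³, (3xD)³, (9D² - y√D)³ of ℚ(√D) form an arithmetic progression. -/
-- `(a + b)³ + (a - b)³ = 2a³ + 6ab²`, so with `a = 9d²`, `b = yα` the defect of the progression
-- is `54d³(y² - x³ + 27d³)`.
theorem cubes_arithProgression_of_sq_eq {R : Type*} [CommRing R] {d x y α : R} (hα : α ^ 2 = d)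
    (hxy : y ^ 2 = x ^ 3 - 27 * d ^ 3) :
    (3 * x * d) ^ 3 - (9 * d ^ 2 + y * α) ^ 3 = (9 * d ^ 2 - y * α) ^ 3 - (3 * x * d) ^ 3 := by
  linear_combination (-54 * d ^ 3) * hxy + (-54 * d ^ 2 * y ^ 2) * hα

theorem stmt_14_general (D : ℤ)
    (K : Type*) [Field K] [Algebra ℚ K] (α : K) (hα : α ^ 2 = (D : K))
    (x y : ℚ) (hxy : y ^ 2 = x ^ 3 - 27 * (D : ℚ) ^ 3) :
    (3 * (x : K) * (D : K)) ^ 3 - (9 * (D : K) ^ 2 + (y : K) * α) ^ 3 =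
      (9 * (D : K) ^ 2 - (y : K) * α) ^ 3 - (3 * (x : K) * (D : K)) ^ 3 :=
  have : CharZero K := algebraRat.charZero K
  cubes_arithProgression_of_sq_eq hα (by exact_mod_cast congrArg (Rat.cast (K := K)) hxy)

/-- For any rational point `(x, y)` on `E^D : y² = x³ - 27D³`, the elements
`(9D² + y√D)³, (3xD)³, (9D² - y√D)³` of `ℚ(√D)` form an arithmetic progression. -/
theorem stmt_14 (D : ℤ) (hD : Squarefree D) (hD0 : D ≠ 0)
    (K : Type*) [Field K] [Algebra ℚ K] (α : K) (hα : α ^ 2 = (D : K))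
    (x y : ℚ) (hxy : y ^ 2 = x ^ 3 - 27 * (D : ℚ) ^ 3) :
    (3 * (x : K) * (D : K)) ^ 3 - (9 * (D : K) ^ 2 + (y : K) * α) ^ 3 =
      (9 * (D : K) ^ 2 - (y : K) * α) ^ 3 - (3 * (x : K) * (D : K)) ^ 3 :=
  stmt_14_general D K α hα x y hxy
end

section
/- The point (10, 28) lies on the curve y² = x³ - 27·2³ = x³ - 216, and consequently (9 + 7√2)³, 15³, (9 - 7√2)³ is an arithmetic progression in ℚ(√2) with 15³ ≠ (9+7√2)³, exhibiting a non-trivial arithmetic progression of three cubes over ℚ(√2). -/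
/-!
Writing `√2` for `α`, the cubes `(9 ± 7√2)³ = 3375 ± 2387√2` are conjugate, and their common
rational part `3375` is `15³`, so `15³` is their mean. The progression is non-constant because the
irrational part `2387√2` does not vanish in characteristic zero.
-/

theorem add_mul_cube {R : Type*} [CommRing R] {α d : R} (hα : α ^ 2 = d) (a b : R) :
    (a + b * α) ^ 3 = a ^ 3 + 3 * a * b ^ 2 * d + (3 * a ^ 2 * b + b ^ 3 * d) * α := by
  linear_combination (3 * a * b ^ 2 + b ^ 3 * α) * hα

theorem sub_mul_cube {R : Type*} [CommRing R] {α d : R} (hα : α ^ 2 = d) (a b : R) :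
    (a - b * α) ^ 3 = a ^ 3 + 3 * a * b ^ 2 * d - (3 * a ^ 2 * b + b ^ 3 * d) * α := by
  linear_combination (3 * a * b ^ 2 - b ^ 3 * α) * hα

/-- The point `(10, 28)` lies on `y² = x³ - 216`, and consequently
`(9 + 7√2)³, 15³, (9 - 7√2)³` is an arithmetic progression in `ℚ(√2)` with
`15³ ≠ (9 + 7√2)³`: a non-trivial arithmetic progression of three cubes over `ℚ(√2)`. -/
theorem stmt_17 (K : Type*) [Field K] [Algebra ℚ K] (α : K) (hα : α ^ 2 = 2) :
    (28 : ℚ) ^ 2 = 10 ^ 3 - 216 ∧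
    ((15 : K) ^ 3 - (9 + 7 * α) ^ 3 = (9 - 7 * α) ^ 3 - (15 : K) ^ 3) ∧
    (15 : K) ^ 3 ≠ (9 + 7 * α) ^ 3 := by
  have : CharZero K := charZero_of_injective_algebraMap (algebraMap ℚ K).injective
  have hplus : (9 + 7 * α) ^ 3 = 15 ^ 3 + 2387 * α := by rw [add_mul_cube hα]; norm_num
  have hminus : (9 - 7 * α) ^ 3 = 15 ^ 3 - 2387 * α := by rw [sub_mul_cube hα]; norm_num
  have hα0 : α ≠ 0 := by rintro rfl; norm_num at hα
  refine ⟨by norm_num, by rw [hplus, hminus]; ring, ?_⟩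
  rw [hplus, ne_eq, left_eq_add]
  exact mul_ne_zero (by norm_num) hα0
end

section
/- The point (7, 98) lies on the curve y² = x³ - 27·(-7)³ = x³ + 9261, and consequently (9·49 + 98√-7)³, (3·7·(-7))³, (9·49 - 98√-7)³ form a non-constant arithmetic progression of cubes in ℚ(√-7). -/
/-!
If `(x, y)` lies on `y² = x³ - 27 D³` and `α² = D`, then `9D² + yα`, `3xD`, `9D² - yα` have
cubes in arithmetic progression: after substituting `α² = D` and `y² = x³ - 27D³`, the sum of
the outer cubes `2(9D²)³ + 6·9D²·y²D` collapses to `2(3xD)³`. The outer cubes differ by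
`2yα(3(9D²)² + y²D)`, which for `(x, y, D) = (7, 98, -7)` is a nonzero multiple of `α`.
-/

theorem cube_arithProgression_of_sq_eq_cube_sub {R : Type*} [CommRing R] {D x y α : R}
    (hα : α ^ 2 = D) (hxy : y ^ 2 = x ^ 3 - 27 * D ^ 3) :
    (3 * x * D) ^ 3 - (9 * D ^ 2 + y * α) ^ 3 = (9 * D ^ 2 - y * α) ^ 3 - (3 * x * D) ^ 3 := by
  linear_combination (-54 * D ^ 2 * y ^ 2) * hα + (-54 * D ^ 3) * hxy

theorem add_mul_pow_three_ne_sub_mul_pow_three {R : Type*} [CommRing R] [NoZeroDivisors R]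
    [NeZero (2 : R)] {A B α : R} (hB : B ≠ 0) (hα : α ≠ 0) (h : 3 * A ^ 2 + B ^ 2 * α ^ 2 ≠ 0) :
    (A + B * α) ^ 3 ≠ (A - B * α) ^ 3 := by
  have hdiff : (A + B * α) ^ 3 - (A - B * α) ^ 3 = 2 * B * α * (3 * A ^ 2 + B ^ 2 * α ^ 2) := by
    ring
  rw [← sub_ne_zero, hdiff]
  exact mul_ne_zero (mul_ne_zero (mul_ne_zero two_ne_zero hB) hα) h

/-- The point `(7, 98)` lies on `y² = x³ + 9261`, and consequently
`(9·49 + 98√-7)³, (3·7·(-7))³, (9·49 - 98√-7)³` is a non-constant arithmetic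
progression of cubes in `ℚ(√-7)`. -/
theorem stmt_18 (K : Type*) [Field K] [Algebra ℚ K] (α : K) (hα : α ^ 2 = -7) :
    (98 : ℚ) ^ 2 = 7 ^ 3 + 9261 ∧
    ((3 * 7 * (-7) : K) ^ 3 - (9 * 49 + 98 * α) ^ 3 =
      (9 * 49 - 98 * α) ^ 3 - (3 * 7 * (-7) : K) ^ 3) ∧
    ¬((9 * 49 + 98 * α) ^ 3 = (3 * 7 * (-7) : K) ^ 3 ∧
      (3 * 7 * (-7) : K) ^ 3 = (9 * 49 - 98 * α) ^ 3) := by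
  have : CharZero K := charZero_of_injective_algebraMap (algebraMap ℚ K).injective
  have hα0 : α ≠ 0 := by
    rintro rfl
    norm_num at hα
  have hcurve : (98 : K) ^ 2 = 7 ^ 3 - 27 * (-7) ^ 3 := by norm_num
  have hprog := cube_arithProgression_of_sq_eq_cube_sub hα hcurve
  have hne : (9 * 49 + 98 * α) ^ 3 ≠ (9 * 49 - 98 * α) ^ 3 :=
    add_mul_pow_three_ne_sub_mul_pow_three (by norm_num) hα0 (by rw [hα]; norm_num)
  refine ⟨by norm_num, by norm_num at hprog ⊢; exact hprog, fun ⟨h₁, h₂⟩ => hne (h₁.trans h₂)⟩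
end
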